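/- For the uncentered outcome influence function term M_j(t) defined with nuisance functions evaluated at their true values, E[M_j(t)] = E[E(Y_t | X, Z = j)]; that is, the weighted residual correction terms have mean zero. -/

import Mathlib

/-!
Work fiber by fiber in `X`. On `{X = x, Z = j}` each correction term of `M_j` is a residual taken
on exactly the event whose conditional mean it subtracts: `Y - μ_a` weighted by the indicator
`R · 1(A = a)` of `{R = 1, A = a}`, and `A - π`. Hence both have mean zero. What remains is the
plug-in term `μ₁ π + μ₀ (1 - π)`: conditional independence of `R` and `Y` turns each `μ_a` into
`E(Y | X, Z = j, A = a)`, and the tower property over the binary `A` gives `E(Y | X, Z = j)`.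
-/

open Finset
open scoped Classical

noncomputable def Pr {Ω : Type*} [Fintype Ω] (p : Ω → ℝ) (A : Ω → Prop) : ℝ :=
  ∑ ω, if A ω then p ω else 0

noncomputable def Ex {Ω : Type*} [Fintype Ω] (p : Ω → ℝ) (f : Ω → ℝ) : ℝ :=
  ∑ ω, p ω * f ω

noncomputable def cexp {Ω : Type*} [Fintype Ω] (p : Ω → ℝ) (f : Ω → ℝ) (A : Ω → Prop) : ℝ :=
  (∑ ω, if A ω then p ω * f ω else 0) / Pr p A

section ConditionalExpectation

variable {Ω : Type*} [Fintype Ω] (p : Ω → ℝ)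

noncomputable def exOn (f : Ω → ℝ) (E : Ω → Prop) : ℝ :=
  ∑ ω, if E ω then p ω * f ω else 0

theorem cexp_eq_exOn_div (f : Ω → ℝ) (E : Ω → Prop) : cexp p f E = exOn p f E / Pr p E := rfl

theorem Pr_nonneg (hp : ∀ ω, 0 ≤ p ω) (E : Ω → Prop) : 0 ≤ Pr p E :=
  Finset.sum_nonneg fun ω _ => by split_ifs <;> simp [hp ω]

theorem exOn_const (c : ℝ) (E : Ω → Prop) : exOn p (fun _ => c) E = c * Pr p E := by
  simp only [exOn, Pr, Finset.mul_sum, mul_ite, mul_zero, mul_comm]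

theorem Pr_congr {E F : Ω → Prop} (h : ∀ ω, E ω ↔ F ω) : Pr p E = Pr p F := by
  simp only [Pr, h]

theorem exOn_congr (f : Ω → ℝ) {E F : Ω → Prop} (h : ∀ ω, E ω ↔ F ω) :
    exOn p f E = exOn p f F := by
  simp only [exOn, h]

theorem cexp_congr (f : Ω → ℝ) {E F : Ω → Prop} (h : ∀ ω, E ω ↔ F ω) :
    cexp p f E = cexp p f F := by
  rw [cexp_eq_exOn_div, cexp_eq_exOn_div, exOn_congr p f h, Pr_congr p h]

theorem exOn_add (f g : Ω → ℝ) (E : Ω → Prop) :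
    exOn p (fun ω => f ω + g ω) E = exOn p f E + exOn p g E := by
  simp only [exOn, ← Finset.sum_add_distrib]
  exact Finset.sum_congr rfl fun ω _ => by split_ifs <;> ring

theorem exOn_sub (f g : Ω → ℝ) (E : Ω → Prop) :
    exOn p (fun ω => f ω - g ω) E = exOn p f E - exOn p g E := by
  simp only [exOn, ← Finset.sum_sub_distrib]
  exact Finset.sum_congr rfl fun ω _ => by split_ifs <;> ring

theorem exOn_const_mul (c : ℝ) (f : Ω → ℝ) (E : Ω → Prop) :
    exOn p (fun ω => c * f ω) E = c * exOn p f E := by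
  simp only [exOn, Finset.mul_sum]
  exact Finset.sum_congr rfl fun ω _ => by split_ifs <;> ring

theorem exOn_ite_mul (F : Ω → Prop) (f : Ω → ℝ) (E : Ω → Prop) :
    exOn p (fun ω => (if F ω then 1 else 0) * f ω) E = exOn p f (fun ω => E ω ∧ F ω) := by
  simp only [exOn]
  exact Finset.sum_congr rfl fun ω _ => by by_cases E ω <;> by_cases F ω <;> simp [*]

theorem exOn_sub_cexp {E : Ω → Prop} (hE : Pr p E ≠ 0) (f : Ω → ℝ) :
    exOn p (fun ω => f ω - cexp p f E) E = 0 := by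
  rw [exOn_sub, exOn_const, cexp_eq_exOn_div, div_mul_cancel₀ _ hE, sub_self]

theorem cexp_const_sub {E : Ω → Prop} (hE : Pr p E ≠ 0) (c : ℝ) (f : Ω → ℝ) :
    cexp p (fun ω => c - f ω) E = c - cexp p f E := by
  rw [cexp_eq_exOn_div, exOn_sub, exOn_const, cexp_eq_exOn_div]
  field_simp

theorem exOn_split_of_binary {A : Ω → ℝ} (hA : ∀ ω, A ω = 0 ∨ A ω = 1) (f : Ω → ℝ)
    (E : Ω → Prop) :
    exOn p f E = exOn p f (fun ω => E ω ∧ A ω = 1) + exOn p f (fun ω => E ω ∧ A ω = 0) := by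
  simp only [exOn, ← Finset.sum_add_distrib]
  refine Finset.sum_congr rfl fun ω _ => ?_
  rcases hA ω with h | h <;> by_cases E ω <;> simp [*]

theorem Pr_split_of_binary {A : Ω → ℝ} (hA : ∀ ω, A ω = 0 ∨ A ω = 1) (E : Ω → Prop) :
    Pr p E = Pr p (fun ω => E ω ∧ A ω = 1) + Pr p (fun ω => E ω ∧ A ω = 0) := by
  simpa only [exOn_const, one_mul] using exOn_split_of_binary p hA (fun _ => 1) E

theorem cexp_of_binary {B : Ω → ℝ} (hB : ∀ ω, B ω = 0 ∨ B ω = 1) (E : Ω → Prop) :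
    cexp p B E = Pr p (fun ω => B ω = 1 ∧ E ω) / Pr p E := by
  rw [cexp_eq_exOn_div]
  congr 1
  refine Finset.sum_congr rfl fun ω _ => ?_
  rcases hB ω with h | h <;> by_cases E ω <;> simp [*]

theorem cexp_and_eq_of_condIndep {Y : Ω → ℝ} (hY : ∀ ω, Y ω = 0 ∨ Y ω = 1) {F E : Ω → Prop}
    (hE : Pr p E ≠ 0) (hFE : Pr p (fun ω => F ω ∧ E ω) ≠ 0)
    (hCI : Pr p (fun ω => F ω ∧ Y ω = 1 ∧ E ω) * Pr p E
      = Pr p (fun ω => F ω ∧ E ω) * Pr p (fun ω => Y ω = 1 ∧ E ω)) :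
    cexp p Y (fun ω => F ω ∧ E ω) = cexp p Y E := by
  rw [cexp_of_binary p hY, cexp_of_binary p hY, div_eq_div_iff hFE hE,
    Pr_congr p fun ω => and_left_comm, hCI, mul_comm]

theorem cexp_eq_add_of_binary {A : Ω → ℝ} (hA : ∀ ω, A ω = 0 ∨ A ω = 1) (f : Ω → ℝ)
    {E : Ω → Prop} (hE : Pr p E ≠ 0) (h1 : Pr p (fun ω => E ω ∧ A ω = 1) ≠ 0)
    (h0 : Pr p (fun ω => E ω ∧ A ω = 0) ≠ 0) :
    cexp p f E = cexp p A E * cexp p f (fun ω => E ω ∧ A ω = 1)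
      + (1 - cexp p A E) * cexp p f (fun ω => E ω ∧ A ω = 0) := by
  have hπ : cexp p A E = Pr p (fun ω => E ω ∧ A ω = 1) / Pr p E := by
    rw [cexp_of_binary p hA, Pr_congr p fun ω => and_comm]
  rw [hπ, cexp_eq_exOn_div p f E, exOn_split_of_binary p hA f E, cexp_eq_exOn_div,
    cexp_eq_exOn_div]
  rw [Pr_split_of_binary p hA E] at hE ⊢
  field_simp
  ring

theorem exOn_aipw_correction_eq_zero {S T : Ω → Prop} {W D Y : Ω → ℝ} {w m π : ℝ}
    (hW : ∀ ω, W ω = if T ω then 1 else 0) (hS : Pr p S ≠ 0)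
    (hST : Pr p (fun ω => S ω ∧ T ω) ≠ 0) (hm : m = cexp p Y (fun ω => S ω ∧ T ω))
    (hπ : π = cexp p D S) :
    exOn p (fun ω => W ω / w * (Y ω - m) + m * (D ω - π)) S = 0 := by
  have hipw : exOn p (fun ω => W ω / w * (Y ω - m)) S = 0 :=
    calc _ = exOn p (fun ω => (if T ω then 1 else 0) * (w⁻¹ * (Y ω - m))) S := by
          simp only [hW, div_eq_inv_mul, mul_comm, mul_assoc]
      _ = 0 := by
          rw [exOn_ite_mul, exOn_const_mul, hm, exOn_sub_cexp p hST, mul_zero]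
  rw [exOn_add, hipw, exOn_const_mul, hπ, exOn_sub_cexp p hS, mul_zero, add_zero]

theorem Ex_eq_sum_exOn_fiber {𝕏 : Type*} [Fintype 𝕏] (X : Ω → 𝕏) (f : Ω → ℝ) :
    Ex p f = ∑ x, exOn p f (fun ω => X ω = x) := by
  simp only [Ex, exOn]
  rw [Finset.sum_comm]
  simp

end ConditionalExpectation

section Fiber

variable {Ω 𝕏 : Type*} [Fintype Ω] (p : Ω → ℝ) (X : Ω → 𝕏) (Z A R Y : Ω → ℝ) (j : ℝ)

theorem exOn_fiber_eq_plugin_add_corrections (δ π : 𝕏 → ℝ) (ωc μ : ℝ → 𝕏 → ℝ) (x : 𝕏) :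
    exOn p (fun ω =>
        μ 1 (X ω) * π (X ω) + μ 0 (X ω) * (1 - π (X ω))
        + (if Z ω = j then 1 else 0) / δ (X ω) *
            (R ω * A ω / ωc 1 (X ω) * (Y ω - μ 1 (X ω)) + μ 1 (X ω) * (A ω - π (X ω)))
        + (if Z ω = j then 1 else 0) / δ (X ω) *
            (R ω * (1 - A ω) / ωc 0 (X ω) * (Y ω - μ 0 (X ω))
              + μ 0 (X ω) * ((1 - A ω) - (1 - π (X ω))))) (fun ω => X ω = x)
      = Pr p (fun ω => X ω = x) * (μ 1 x * π x + μ 0 x * (1 - π x))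
        + (δ x)⁻¹ * (exOn p (fun ω => R ω * A ω / ωc 1 x * (Y ω - μ 1 x) + μ 1 x * (A ω - π x))
            (fun ω => X ω = x ∧ Z ω = j)
          + exOn p (fun ω => R ω * (1 - A ω) / ωc 0 x * (Y ω - μ 0 x)
              + μ 0 x * ((1 - A ω) - (1 - π x))) (fun ω => X ω = x ∧ Z ω = j)) := by
  simp only [exOn, Pr, Finset.mul_sum, Finset.sum_mul, ← Finset.sum_add_distrib]
  refine Finset.sum_congr rfl fun ω _ => ?_
  by_cases hx : X ω = x <;> by_cases hz : Z ω = j <;> simp [hx, hz]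
  ring

theorem cexp_outcome_eq_of_condIndep (hY : ∀ ω, Y ω = 0 ∨ Y ω = 1) {x : 𝕏} {a : ℝ}
    (hCI : Pr p (fun ω => R ω = 1 ∧ Y ω = 1 ∧ X ω = x ∧ Z ω = j ∧ A ω = a) *
          Pr p (fun ω => X ω = x ∧ Z ω = j ∧ A ω = a)
        = Pr p (fun ω => R ω = 1 ∧ X ω = x ∧ Z ω = j ∧ A ω = a) *
            Pr p (fun ω => Y ω = 1 ∧ X ω = x ∧ Z ω = j ∧ A ω = a))
    (hA : Pr p (fun ω => X ω = x ∧ Z ω = j ∧ A ω = a) ≠ 0)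
    (hAR : Pr p (fun ω => X ω = x ∧ Z ω = j ∧ A ω = a ∧ R ω = 1) ≠ 0) :
    cexp p Y (fun ω => X ω = x ∧ R ω = 1 ∧ Z ω = j ∧ A ω = a)
      = cexp p Y (fun ω => (X ω = x ∧ Z ω = j) ∧ A ω = a) :=
  calc _ = cexp p Y (fun ω => R ω = 1 ∧ X ω = x ∧ Z ω = j ∧ A ω = a) :=
        cexp_congr p Y fun ω => and_left_comm
    _ = cexp p Y (fun ω => X ω = x ∧ Z ω = j ∧ A ω = a) :=
        cexp_and_eq_of_condIndep p hY hA ((Pr_congr p fun ω => by tauto).trans_ne hAR) hCI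
    _ = _ := cexp_congr p Y fun ω => and_assoc.symm

end Fiber

theorem M_term_mean_general {Ω 𝕏 : Type*} [Fintype Ω] [Fintype 𝕏]
    (p : Ω → ℝ) (hp0 : ∀ ω, 0 ≤ p ω)
    (X : Ω → 𝕏) (Z A R Y : Ω → ℝ)
    (hAbin : ∀ ω, A ω = 0 ∨ A ω = 1)
    (hRbin : ∀ ω, R ω = 0 ∨ R ω = 1) (hYbin : ∀ ω, Y ω = 0 ∨ Y ω = 1)
    (j : ℝ)
    -- R ⟂ Y_t | (X, Z, A)
    (hCI : ∀ (x : 𝕏) (a : ℝ), a = 0 ∨ a = 1 →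
      Pr p (fun ω => R ω = 1 ∧ Y ω = 1 ∧ X ω = x ∧ Z ω = j ∧ A ω = a) *
          Pr p (fun ω => X ω = x ∧ Z ω = j ∧ A ω = a)
        = Pr p (fun ω => R ω = 1 ∧ X ω = x ∧ Z ω = j ∧ A ω = a) *
            Pr p (fun ω => Y ω = 1 ∧ X ω = x ∧ Z ω = j ∧ A ω = a))
    -- positivity: δ_j(X) > 0, π_j(X) ∈ (0,1), ω_{j,a}(X) > 0
    (hpos : ∀ x : 𝕏, Pr p (fun ω => X ω = x) > 0 →
      Pr p (fun ω => Z ω = j ∧ X ω = x) > 0 ∧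
      (∀ a : ℝ, a = 0 ∨ a = 1 →
        Pr p (fun ω => X ω = x ∧ Z ω = j ∧ A ω = a) > 0 ∧
        Pr p (fun ω => X ω = x ∧ Z ω = j ∧ A ω = a ∧ R ω = 1) > 0)) :
    let δ : 𝕏 → ℝ := fun x =>
      Pr p (fun ω => Z ω = j ∧ X ω = x) / Pr p (fun ω => X ω = x)
    let π : 𝕏 → ℝ := fun x => cexp p A (fun ω => X ω = x ∧ Z ω = j)
    let ωc : ℝ → 𝕏 → ℝ := fun a x => cexp p R (fun ω => X ω = x ∧ Z ω = j ∧ A ω = a)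
    let μ : ℝ → 𝕏 → ℝ := fun a x =>
      cexp p Y (fun ω => X ω = x ∧ R ω = 1 ∧ Z ω = j ∧ A ω = a)
    Ex p (fun ω =>
        μ 1 (X ω) * π (X ω) + μ 0 (X ω) * (1 - π (X ω))
        + (if Z ω = j then 1 else 0) / δ (X ω) *
            (R ω * A ω / ωc 1 (X ω) * (Y ω - μ 1 (X ω)) + μ 1 (X ω) * (A ω - π (X ω)))
        + (if Z ω = j then 1 else 0) / δ (X ω) *
            (R ω * (1 - A ω) / ωc 0 (X ω) * (Y ω - μ 0 (X ω))
              + μ 0 (X ω) * ((1 - A ω) - (1 - π (X ω)))))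
      = ∑ x : 𝕏, Pr p (fun ω => X ω = x) * cexp p Y (fun ω => X ω = x ∧ Z ω = j) := by
  intro δ π ωc μ
  rw [Ex_eq_sum_exOn_fiber p X]
  refine Finset.sum_congr rfl fun x _ => ?_
  rw [exOn_fiber_eq_plugin_add_corrections]
  set S : Ω → Prop := fun ω => X ω = x ∧ Z ω = j
  rcases (Pr_nonneg p hp0 (fun ω => X ω = x)).eq_or_lt with hx | hx
  · -- `δ x = 0` on a null fiber, so the corrections vanish there too (`x / 0 = 0`)
    simp [δ, ← hx]
  obtain ⟨hZ, hA⟩ := hpos x hx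
  have hS : Pr p S ≠ 0 := (Pr_congr p fun ω => and_comm).trans_ne hZ.ne'
  have hSA : ∀ a, a = 0 ∨ a = 1 → Pr p (fun ω => S ω ∧ A ω = a) ≠ 0 := fun a ha =>
    (Pr_congr p fun ω => and_assoc).trans_ne (hA a ha).1.ne'
  have hSAR : ∀ a, a = 0 ∨ a = 1 → Pr p (fun ω => S ω ∧ (R ω = 1 ∧ A ω = a)) ≠ 0 :=
    fun a ha => (Pr_congr p fun ω => by tauto).trans_ne (hA a ha).2.ne'
  have hμ : ∀ a, a = 0 ∨ a = 1 → μ a x = cexp p Y (fun ω => S ω ∧ A ω = a) := fun a ha =>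
    cexp_outcome_eq_of_condIndep p X Z A R Y j hYbin (hCI x a ha) (hA a ha).1.ne' (hA a ha).2.ne'
  have hcorr1 : exOn p (fun ω => R ω * A ω / ωc 1 x * (Y ω - μ 1 x)
      + μ 1 x * (A ω - π x)) S = 0 :=
    exOn_aipw_correction_eq_zero p (T := fun ω => R ω = 1 ∧ A ω = 1)
      (fun ω => by rcases hRbin ω with h | h <;> rcases hAbin ω with h' | h' <;> simp [h, h'])
      hS (hSAR 1 (Or.inr rfl)) (cexp_congr p Y fun ω => by tauto) rfl
  have hcorr0 : exOn p (fun ω => R ω * (1 - A ω) / ωc 0 x * (Y ω - μ 0 x)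
      + μ 0 x * ((1 - A ω) - (1 - π x))) S = 0 :=
    exOn_aipw_correction_eq_zero p (T := fun ω => R ω = 1 ∧ A ω = 0)
      (fun ω => by rcases hRbin ω with h | h <;> rcases hAbin ω with h' | h' <;> simp [h, h'])
      hS (hSAR 0 (Or.inl rfl)) (cexp_congr p Y fun ω => by tauto) (cexp_const_sub p hS 1 A).symm
  rw [hcorr1, hcorr0, hμ 1 (Or.inr rfl), hμ 0 (Or.inl rfl),
    cexp_eq_add_of_binary p hAbin Y hS (hSA 1 (Or.inr rfl)) (hSA 0 (Or.inl rfl))]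
  ring

/-- the uncentered outcome influence function term M_j(t), evaluated at the
true nuisance values, has mean E[E(Y_t | X, Z = j)]. -/
theorem M_term_mean {Ω 𝕏 : Type*} [Fintype Ω] [Fintype 𝕏]
    (p : Ω → ℝ) (hp0 : ∀ ω, 0 ≤ p ω) (hp1 : ∑ ω, p ω = 1)
    (X : Ω → 𝕏) (Z A R Y : Ω → ℝ)
    (hZbin : ∀ ω, Z ω = 0 ∨ Z ω = 1) (hAbin : ∀ ω, A ω = 0 ∨ A ω = 1)
    (hRbin : ∀ ω, R ω = 0 ∨ R ω = 1) (hYbin : ∀ ω, Y ω = 0 ∨ Y ω = 1)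
    (j : ℝ) (hj : j = 0 ∨ j = 1)
    -- R ⟂ Y_t | (X, Z, A)
    (hCI : ∀ (x : 𝕏) (a : ℝ), a = 0 ∨ a = 1 →
      Pr p (fun ω => R ω = 1 ∧ Y ω = 1 ∧ X ω = x ∧ Z ω = j ∧ A ω = a) *
          Pr p (fun ω => X ω = x ∧ Z ω = j ∧ A ω = a)
        = Pr p (fun ω => R ω = 1 ∧ X ω = x ∧ Z ω = j ∧ A ω = a) *
            Pr p (fun ω => Y ω = 1 ∧ X ω = x ∧ Z ω = j ∧ A ω = a))
    -- positivity: δ_j(X) > 0, π_j(X) ∈ (0,1), ω_{j,a}(X) > 0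
    (hpos : ∀ x : 𝕏, Pr p (fun ω => X ω = x) > 0 →
      Pr p (fun ω => Z ω = j ∧ X ω = x) > 0 ∧
      (∀ a : ℝ, a = 0 ∨ a = 1 →
        Pr p (fun ω => X ω = x ∧ Z ω = j ∧ A ω = a) > 0 ∧
        Pr p (fun ω => X ω = x ∧ Z ω = j ∧ A ω = a ∧ R ω = 1) > 0)) :
    let δ : 𝕏 → ℝ := fun x =>
      Pr p (fun ω => Z ω = j ∧ X ω = x) / Pr p (fun ω => X ω = x)
    let π : 𝕏 → ℝ := fun x => cexp p A (fun ω => X ω = x ∧ Z ω = j)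
    let ωc : ℝ → 𝕏 → ℝ := fun a x => cexp p R (fun ω => X ω = x ∧ Z ω = j ∧ A ω = a)
    let μ : ℝ → 𝕏 → ℝ := fun a x =>
      cexp p Y (fun ω => X ω = x ∧ R ω = 1 ∧ Z ω = j ∧ A ω = a)
    Ex p (fun ω =>
        μ 1 (X ω) * π (X ω) + μ 0 (X ω) * (1 - π (X ω))
        + (if Z ω = j then 1 else 0) / δ (X ω) *
            (R ω * A ω / ωc 1 (X ω) * (Y ω - μ 1 (X ω)) + μ 1 (X ω) * (A ω - π (X ω)))
        + (if Z ω = j then 1 else 0) / δ (X ω) *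
            (R ω * (1 - A ω) / ωc 0 (X ω) * (Y ω - μ 0 (X ω))
              + μ 0 (X ω) * ((1 - A ω) - (1 - π (X ω)))))
      = ∑ x : 𝕏, Pr p (fun ω => X ω = x) * cexp p Y (fun ω => X ω = x ∧ Z ω = j) :=
  M_term_mean_general p hp0 X Z A R Y hAbin hRbin hYbin j hCI hpos
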